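/- The set of all local derivations of π₃ is a Lie subalgebra of the Lie algebra of linear endomorphisms of π₃: it is a complex linear subspace, and for any two local derivations ∇ and Δ of π₃, the commutator [∇,Δ] = ∇∘Δ − Δ∘∇ is again a local derivation of π₃. -/
import Mathlib


noncomputable section

/-- The multiplication of the 5-dimensional naturally graded nilpotent associative
algebra `π₃`, given on the basis `e₁, …, e₅` (indices `0, …, 4`) by
`e₁e₁ = e₂`, `e₁e₂ = e₂e₁ = e₃`, `e₁e₄ = e₅`, `e₄e₄ = e₅`. -/
def pi3Mul (x y : Fin 5 → ℂ) : Fin 5 → ℂ :=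
  ![0, x 0 * y 0, x 0 * y 1 + x 1 * y 0, 0, x 0 * y 3 + x 3 * y 3]

/-- A derivation of `π₃`: a linear operator satisfying the Leibniz rule. -/
def IsPi3Der (D : (Fin 5 → ℂ) →ₗ[ℂ] (Fin 5 → ℂ)) : Prop :=
  ∀ x y, D (pi3Mul x y) = pi3Mul (D x) y + pi3Mul x (D y)

/-- A local derivation of `π₃`: a linear operator that agrees at every point with
some derivation (depending on the point). -/
def IsPi3LocDer (f : (Fin 5 → ℂ) →ₗ[ℂ] (Fin 5 → ℂ)) : Prop :=
  ∀ x : Fin 5 → ℂ, ∃ D : (Fin 5 → ℂ) →ₗ[ℂ] (Fin 5 → ℂ), IsPi3Der D ∧ f x = D x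

def E (i : Fin 5) : Fin 5 → ℂ := fun j => if i = j then 1 else 0

def derFun (a b c f g h : ℂ) (x : Fin 5 → ℂ) : Fin 5 → ℂ :=
  ![a * x 0, b * x 0 + 2*a*x 1,
    c * x 0 + 2*b*x 1 + 3*a*x 2 + g * x 3, a * x 3, f * x 0 + h * x 3 + 2*a * x 4]

def mkDer (a b c f g h : ℂ) : (Fin 5 → ℂ) →ₗ[ℂ] (Fin 5 → ℂ) where
  toFun := derFun a b c f g h
  map_add' x y := by
    funext i; fin_cases i <;> simp [derFun] <;> ring
  map_smul' m x := by
    funext i; fin_cases i <;> simp [derFun] <;> ring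

lemma mkDer_apply (a b c f g h : ℂ) (x : Fin 5 → ℂ) :
    mkDer a b c f g h x = derFun a b c f g h x := rfl

lemma mkDer_isDer (a b c f g h : ℂ) : IsPi3Der (mkDer a b c f g h) := by
  intro x y
  funext i
  rw [mkDer_apply, mkDer_apply, mkDer_apply]
  fin_cases i <;> simp [derFun, pi3Mul] <;> ring

lemma E_def (i : Fin 5) : (fun j => if i = j then (1:ℂ) else 0) = E i := rfl

lemma der_struct {D : (Fin 5 → ℂ) →ₗ[ℂ] (Fin 5 → ℂ)} (hD : IsPi3Der D) (x : Fin 5 → ℂ) :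
    D x = derFun (D (E 0) 0) (D (E 0) 1) (D (E 0) 2) (D (E 0) 4) (D (E 3) 2) (D (E 3) 4) x := by
  -- from D(e3 * e0) = 0
  have h30 : (0 : Fin 5 → ℂ) = pi3Mul (D (E 3)) (E 0) + pi3Mul (E 3) (D (E 0)) := by
    have he : pi3Mul (E 3) (E 0) = 0 := by funext i; fin_cases i <;> simp [pi3Mul, E]
    have := hD (E 3) (E 0); rw [he, map_zero] at this; exact this
  have d03 : D (E 3) 0 = 0 := by
    have := congrFun h30 1; simp [pi3Mul, E] at this; exact this.symm
  have d13 : D (E 3) 1 = 0 := by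
    have := congrFun h30 2; simp [pi3Mul, E, d03] at this; exact this.symm
  have d30 : D (E 0) 3 = 0 := by
    have := congrFun h30 4; simp [pi3Mul, E] at this; exact this.symm
  -- column 1 : D(e0 * e0) = D e1
  have h1 : D (E 1) = ![0, 2 * D (E 0) 0, 2 * D (E 0) 1, 0, 0] := by
    have he : pi3Mul (E 0) (E 0) = E 1 := by funext i; fin_cases i <;> simp [pi3Mul, E]
    have := hD (E 0) (E 0); rw [he] at this; rw [this]
    funext i; fin_cases i <;> simp [pi3Mul, E, d30] <;> ring
  -- column 2 : D(e0 * e1) = D e2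
  have h2 : D (E 2) = ![0, 0, 3 * D (E 0) 0, 0, 0] := by
    have he : pi3Mul (E 0) (E 1) = E 2 := by funext i; fin_cases i <;> simp [pi3Mul, E]
    have := hD (E 0) (E 1); rw [he] at this; rw [this]
    funext i; fin_cases i <;> simp [pi3Mul, E, h1] <;> ring
  -- D e4 from e0*e3 and e3*e3
  have h403 : D (E 4) = pi3Mul (D (E 0)) (E 3) + pi3Mul (E 0) (D (E 3)) := by
    have he : pi3Mul (E 0) (E 3) = E 4 := by funext i; fin_cases i <;> simp [pi3Mul, E]
    have := hD (E 0) (E 3); rw [he] at this; exact this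
  have h433 : D (E 4) = pi3Mul (D (E 3)) (E 3) + pi3Mul (E 3) (D (E 3)) := by
    have he : pi3Mul (E 3) (E 3) = E 4 := by funext i; fin_cases i <;> simp [pi3Mul, E]
    have := hD (E 3) (E 3); rw [he] at this; exact this
  have d33 : D (E 3) 3 = D (E 0) 0 := by
    have e1 := congrFun h403 4
    have e2 := congrFun h433 4
    rw [e1] at e2
    simp [pi3Mul, E, d03, d30] at e2
    exact e2.symm
  have h4 : D (E 4) = ![0, 0, 0, 0, 2 * D (E 0) 0] := by
    rw [h403]; funext i; fin_cases i <;> simp [pi3Mul, E, d03, d13, d30, d33] <;> ring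
  -- assemble
  rw [LinearMap.pi_apply_eq_sum_univ D x]
  simp only [Fin.sum_univ_five, E_def]
  funext i
  rw [h1, h2, h4]
  have s3 : Fin.succ 2 = (3 : Fin 5) := rfl
  have s4 : Fin.succ 3 = (4 : Fin 5) := rfl
  have s5 : (Fin.succ 2).succ = (4 : Fin 5) := rfl
  fin_cases i <;>
    simp [derFun, Matrix.vecHead, Matrix.vecTail, Function.comp, Pi.smul_apply, smul_eq_mul,
      s3, s4, s5, d30, d03, d13, d33] <;> ring

def locFun (a p q r s t u : ℂ) (x : Fin 5 → ℂ) : Fin 5 → ℂ :=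
  ![a * x 0, p * x 0 + 2*a*x 1,
    q * x 0 + s*x 1 + 3*a*x 2 + t*x 3, a * x 3, r * x 0 + u * x 3 + 2*a*x 4]

def LocCond (f : (Fin 5 → ℂ) →ₗ[ℂ] (Fin 5 → ℂ)) : Prop :=
  ∃ a p q r s t u : ℂ, ∀ x, f x = locFun a p q r s t u x

lemma cond_locDer {f : (Fin 5 → ℂ) →ₗ[ℂ] (Fin 5 → ℂ)} (hf : LocCond f) : IsPi3LocDer f := by
  obtain ⟨a, p, q, r, s, t, u, hf⟩ := hf
  intro x
  by_cases hx : x 0 = 0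
  · refine ⟨mkDer a (s/2) 0 r t u, mkDer_isDer _ _ _ _ _ _, ?_⟩
    rw [hf x, mkDer_apply]
    funext i; fin_cases i <;> (simp [locFun, derFun, hx]; try ring) <;> try tauto
  · refine ⟨mkDer a p (q + (s - 2*p) * x 1 * (x 0)⁻¹) r t u, mkDer_isDer _ _ _ _ _ _, ?_⟩
    rw [hf x, mkDer_apply]
    funext i; fin_cases i <;> simp [locFun, derFun] <;> field_simp <;> ring

lemma locDer_cond {f : (Fin 5 → ℂ) →ₗ[ℂ] (Fin 5 → ℂ)} (hf : IsPi3LocDer f) : LocCond f := by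
  -- individual basis points
  obtain ⟨D0, hD0, h0⟩ := hf (E 0); rw [der_struct hD0] at h0
  have z03 : f (E 0) 3 = 0 := by simpa [derFun, E] using congrFun h0 3
  obtain ⟨D1, hD1, h1⟩ := hf (E 1); rw [der_struct hD1] at h1
  have z10 : f (E 1) 0 = 0 := by simpa [derFun, E] using congrFun h1 0
  have z13 : f (E 1) 3 = 0 := by simpa [derFun, E] using congrFun h1 3
  have z14 : f (E 1) 4 = 0 := by simpa [derFun, E] using congrFun h1 4
  obtain ⟨D2, hD2, h2⟩ := hf (E 2); rw [der_struct hD2] at h2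
  have z20 : f (E 2) 0 = 0 := by simpa [derFun, E] using congrFun h2 0
  have z21 : f (E 2) 1 = 0 := by simpa [derFun, E] using congrFun h2 1
  have z23 : f (E 2) 3 = 0 := by simpa [derFun, E] using congrFun h2 3
  have z24 : f (E 2) 4 = 0 := by simpa [derFun, E] using congrFun h2 4
  obtain ⟨D3, hD3, h3⟩ := hf (E 3); rw [der_struct hD3] at h3
  have z30 : f (E 3) 0 = 0 := by simpa [derFun, E] using congrFun h3 0
  have z31 : f (E 3) 1 = 0 := by simpa [derFun, E] using congrFun h3 1
  obtain ⟨D4, hD4, h4⟩ := hf (E 4); rw [der_struct hD4] at h4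
  have z40 : f (E 4) 0 = 0 := by simpa [derFun, E] using congrFun h4 0
  have z41 : f (E 4) 1 = 0 := by simpa [derFun, E] using congrFun h4 1
  have z42 : f (E 4) 2 = 0 := by simpa [derFun, E] using congrFun h4 2
  have z43 : f (E 4) 3 = 0 := by simpa [derFun, E] using congrFun h4 3
  -- mixed points
  have k33 : f (E 3) 3 = f (E 0) 0 := by
    obtain ⟨D, hD, h⟩ := hf (E 0 + E 3); rw [der_struct hD, map_add] at h
    have e0 := congrFun h 0; have e3 := congrFun h 3
    simp [derFun, E, z30, z03] at e0 e3
    rw [← e0] at e3; exact e3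
  have k11 : f (E 1) 1 = 2 * f (E 0) 0 := by
    obtain ⟨D, hD, h⟩ := hf (E 1 + E 3); rw [der_struct hD, map_add] at h
    have e1 := congrFun h 1; have e3 := congrFun h 3
    simp [derFun, E, z31, z13, k33] at e1 e3
    linear_combination e1 - 2 * e3
  have k44 : f (E 4) 4 = 2 * f (E 0) 0 := by
    obtain ⟨D, hD, h⟩ := hf (E 1 + E 4); rw [der_struct hD, map_add] at h
    have e1 := congrFun h 1; have e4 := congrFun h 4
    simp [derFun, E, z41, z14, k11] at e1 e4
    linear_combination e4 - 2 * e1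
  have k22 : f (E 2) 2 = 3 * f (E 0) 0 := by
    obtain ⟨D, hD, h⟩ := hf (E 2 + E 4); rw [der_struct hD, map_add] at h
    have e2 := congrFun h 2; have e4 := congrFun h 4
    simp [derFun, E, z42, z24, k44] at e2 e4
    linear_combination e2 - 3 * e4
  refine ⟨f (E 0) 0, f (E 0) 1, f (E 0) 2, f (E 0) 4, f (E 1) 2, f (E 3) 2, f (E 3) 4, ?_⟩
  intro x
  rw [LinearMap.pi_apply_eq_sum_univ f x]
  simp only [Fin.sum_univ_five, E_def]
  funext i
  have s3 : Fin.succ 2 = (3 : Fin 5) := rfl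
  have s4 : Fin.succ 3 = (4 : Fin 5) := rfl
  have s5 : (Fin.succ 2).succ = (4 : Fin 5) := rfl
  fin_cases i <;>
    simp [locFun, Matrix.vecHead, Matrix.vecTail, Function.comp, Pi.smul_apply, smul_eq_mul,
      s3, s4, s5, z03, z10, z13, z14, z20, z21, z23, z24, z30, z31, z40, z41, z42, z43,
      k33, k11, k44, k22] <;> ring

lemma locFun_add (a p q r s t u a' p' q' r' s' t' u' : ℂ) (x : Fin 5 → ℂ) :
    locFun a p q r s t u x + locFun a' p' q' r' s' t' u' x
      = locFun (a+a') (p+p') (q+q') (r+r') (s+s') (t+t') (u+u') x := by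
  funext i; fin_cases i <;> simp [locFun] <;> ring

lemma locFun_smul (m a p q r s t u : ℂ) (x : Fin 5 → ℂ) :
    m • locFun a p q r s t u x = locFun (m*a) (m*p) (m*q) (m*r) (m*s) (m*t) (m*u) x := by
  funext i; fin_cases i <;> simp [locFun] <;> ring


/-- The local derivations of `π₃` form a complex linear subspace of the space of
linear endomorphisms of `π₃` which is closed under the commutator bracket, i.e.,
a Lie subalgebra of the Lie algebra of linear endomorphisms. -/
theorem pi3_locDer_lieAlgebra :
    (∃ S : Submodule ℂ ((Fin 5 → ℂ) →ₗ[ℂ] (Fin 5 → ℂ)),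
        (S : Set ((Fin 5 → ℂ) →ₗ[ℂ] (Fin 5 → ℂ))) = {f | IsPi3LocDer f}) ∧
    (∀ f g : (Fin 5 → ℂ) →ₗ[ℂ] (Fin 5 → ℂ), IsPi3LocDer f → IsPi3LocDer g →
        IsPi3LocDer (f ∘ₗ g - g ∘ₗ f)) := by
  constructor
  · refine ⟨{ carrier := {f | IsPi3LocDer f}
              add_mem' := ?_
              zero_mem' := ?_
              smul_mem' := ?_ }, rfl⟩
    · intro f g hf hg
      simp only [Set.mem_setOf_eq] at *
      obtain ⟨a, p, q, r, s, t, u, hf⟩ := locDer_cond hf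
      obtain ⟨a', p', q', r', s', t', u', hg⟩ := locDer_cond hg
      exact cond_locDer ⟨a+a', p+p', q+q', r+r', s+s', t+t', u+u', fun x => by
        rw [LinearMap.add_apply, hf x, hg x, locFun_add]⟩
    · simp only [Set.mem_setOf_eq]
      exact cond_locDer ⟨0, 0, 0, 0, 0, 0, 0, fun x => by
        funext i; fin_cases i <;> simp [locFun]⟩
    · intro m f hf
      simp only [Set.mem_setOf_eq] at *
      obtain ⟨a, p, q, r, s, t, u, hf⟩ := locDer_cond hf
      exact cond_locDer ⟨m*a, m*p, m*q, m*r, m*s, m*t, m*u, fun x => by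
        rw [LinearMap.smul_apply, hf x, locFun_smul]⟩
  · intro f g hf hg
    obtain ⟨a, p, q, r, s, t, u, hf⟩ := locDer_cond hf
    obtain ⟨a', p', q', r', s', t', u', hg⟩ := locDer_cond hg
    refine cond_locDer ⟨0, a*p' - a'*p, s*p' - s'*p + 2*(a*q' - a'*q), a*r' - a'*r,
      a*s' - a'*s, 2*(a*t' - a'*t), a*u' - a'*u, fun x => ?_⟩
    rw [LinearMap.sub_apply, LinearMap.comp_apply, LinearMap.comp_apply,
      hf (g x), hg (f x), hg x, hf x]
    funext i; fin_cases i <;> simp [locFun] <;> ring
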